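/- arXiv:1904.05579 — 4 statements merged into one kernel-verified Lean document; each statement's English description precedes it below -/
import Mathlib

section
/- If W is a Γ-graded irreducible gl_N-module with dim W > 1, then for every α ∈ ℂ^d and β ∈ ℂ the g-module V(α,β,W) is irreducible (it is nonzero and has no g-submodules other than 0 and itself). -/
open scoped BigOperators

noncomputable section

/-- The index `2i-1` (1-based), i.e. `2i` (0-based). -/
def p1 {d z : ℕ} (h : 2*z ≤ d) (i : Fin z) : Fin d := ⟨2*(i:ℕ), by have := i.2; omega⟩

/-- The index `2i` (1-based), i.e. `2i+1` (0-based). -/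
def p2 {d z : ℕ} (h : 2*z ≤ d) (i : Fin z) : Fin d := ⟨2*(i:ℕ)+1, by have := i.2; omega⟩

/-- `σ(m,n) = ∏_i q_i^{n_{2i} m_{2i-1}}`. -/
def qsigma {d z : ℕ} (h : 2*z ≤ d) (q : Fin z → ℂ) (m n : Fin d → ℤ) : ℂ :=
  ∏ i : Fin z, q i ^ (n (p2 h i) * m (p1 h i))

/-- The subgroup `R = ⊕ (ℤ k_i e_{2i-1} ⊕ ℤ k_i e_{2i}) ⊕ ⊕_{l > 2z} ℤ e_l` of `ℤ^d`. -/
def Rgrp {d z : ℕ} (h : 2*z ≤ d) (k : Fin z → ℕ) : AddSubgroup (Fin d → ℤ) where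
  carrier := {m | ∀ i : Fin z, ((k i : ℤ) ∣ m (p1 h i)) ∧ ((k i : ℤ) ∣ m (p2 h i))}
  zero_mem' := fun i => ⟨dvd_zero _, dvd_zero _⟩
  add_mem' := fun ha hb i => ⟨dvd_add (ha i).1 (hb i).1, dvd_add (ha i).2 (hb i).2⟩
  neg_mem' := fun ha i => ⟨dvd_neg.mpr (ha i).1, dvd_neg.mpr (ha i).2⟩

/-- Membership in the set `Γ₀` of distinguished coset representatives for `ℤ^d/R`. -/
def inGamma0 {d z : ℕ} (h : 2*z ≤ d) (k : Fin z → ℕ) (n : Fin d → ℤ) : Prop :=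
  (∀ i : Fin z, 0 ≤ n (p1 h i) ∧ n (p1 h i) < k i ∧ 0 ≤ n (p2 h i) ∧ n (p2 h i) < k i) ∧
  ∀ l : Fin d, 2*z ≤ (l:ℕ) → n l = 0

/-- The representative in `Γ₀` of the coset `n + R`. -/
def repZ {d z : ℕ} (h : 2*z ≤ d) (k : Fin z → ℕ) (n : Fin d → ℤ) : Fin d → ℤ :=
  fun l => if hl : (l:ℕ) < 2*z then n l % (k ⟨(l:ℕ)/2, by omega⟩ : ℤ) else 0

/-- `(γ|m) = ∑ γ_i m_i`. -/
def ginner {d : ℕ} (γ : Fin d → ℂ) (m : Fin d → ℤ) : ℂ := ∑ i, γ i * (m i : ℂ)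

/-- The matrix `X^n = ⊗_i X_{2i-1}^{n_{2i-1}} X_{2i}^{n_{2i}} ∈ gl_N`, realized on the
index set `∏_i Fin (k_i)` (of cardinality `N = k_1 ⋯ k_z`). -/
def Xmat {d z : ℕ} (h : 2*z ≤ d) (k : Fin z → ℕ) (q : Fin z → ℂ) (n : Fin d → ℤ) :
    Matrix ((i : Fin z) → Fin (k i)) ((i : Fin z) → Fin (k i)) ℂ :=
  Matrix.of fun j l => ∏ i : Fin z,
    (q i ^ (n (p1 h i) * (j i : ℤ)) *
      (if (l i : ℤ) = ((j i : ℤ) + n (p2 h i)) % (k i) then 1 else 0))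

lemma repZ_mem {d z : ℕ} (h : 2*z ≤ d) (k : Fin z → ℕ) (hk : ∀ i, 0 < k i)
    (n : Fin d → ℤ) : inGamma0 h k (repZ h k n) := by
  constructor
  · intro i
    have h1 : ((p1 h i : ℕ)) < 2*z := by simp only [p1]; have := i.2; omega
    have h2 : ((p2 h i : ℕ)) < 2*z := by simp only [p2]; have := i.2; omega
    have e1 : (⟨((p1 h i : ℕ))/2, by omega⟩ : Fin z) = i := by
      apply Fin.ext; simp only [p1]; omega
    have e2 : (⟨((p2 h i : ℕ))/2, by omega⟩ : Fin z) = i := by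
      apply Fin.ext; simp only [p2]; omega
    have hk' : (0:ℤ) < (k i : ℤ) := by exact_mod_cast hk i
    refine ⟨?_, ?_, ?_, ?_⟩ <;> simp only [repZ, dif_pos h1, dif_pos h2, e1, e2]
    · exact Int.emod_nonneg _ (by exact_mod_cast (hk i).ne')
    · exact Int.emod_lt_of_pos _ hk'
    · exact Int.emod_nonneg _ (by exact_mod_cast (hk i).ne')
    · exact Int.emod_lt_of_pos _ hk'
  · intro l hl
    simp only [repZ, dif_neg (by omega : ¬ (l:ℕ) < 2*z)]

/-- A family of operators is a weight module with uniformly bounded finite-dimensional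
weight spaces (cuspidality), with respect to the Cartan operator `L0`. -/
def IsCuspidalFor {M : Type*} [AddCommGroup M] [Module ℂ M] (L0 : Module.End ℂ M) : Prop :=
  ((⨆ c : ℂ, Module.End.eigenspace L0 c) = ⊤) ∧
  (∀ c : ℂ, FiniteDimensional ℂ (Module.End.eigenspace L0 c)) ∧
  ∃ B : ℕ, ∀ c : ℂ, Module.finrank ℂ (Module.End.eigenspace L0 c) ≤ B

/-- The defining bracket relations of the solenoidal Lie algebra `g` over the rational
quantum torus, for a family of operators `L` (i.e. `M` is a `g`-module). -/
def GRel {d z : ℕ} (h : 2*z ≤ d) (k : Fin z → ℕ) (q : Fin z → ℂ) (γ : Fin d → ℂ)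
    {M : Type*} [AddCommGroup M] [Module ℂ M] (L : (Fin d → ℤ) → Module.End ℂ M) : Prop :=
  (∀ m n, m ∈ Rgrp h k → n ∈ Rgrp h k → ⁅L m, L n⁆ = (ginner γ (n - m)) • L (m + n)) ∧
  (∀ m s, m ∈ Rgrp h k → s ∉ Rgrp h k → ⁅L m, L s⁆ = (ginner γ s) • L (m + s)) ∧
  (∀ r s, r ∉ Rgrp h k → s ∉ Rgrp h k →
    ⁅L r, L s⁆ = (qsigma h q r s - qsigma h q s r) • L (r + s))

/-- The relations making `(L, T)` a `Zg`-module structure: `Z` acts associatively and the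
semidirect-product brackets `[L_m, t^n] = (γ|n) t^{m+n}`, `[L_r, t^n] = 0` hold. -/
def ZRel {d z : ℕ} (h : 2*z ≤ d) (k : Fin z → ℕ) (γ : Fin d → ℂ)
    {M : Type*} [AddCommGroup M] [Module ℂ M] (L T : (Fin d → ℤ) → Module.End ℂ M) : Prop :=
  (∀ m n, m ∈ Rgrp h k → n ∈ Rgrp h k → T m * T n = T (m + n)) ∧
  (T 0 = 1) ∧
  (∀ m n, m ∈ Rgrp h k → n ∈ Rgrp h k → ⁅L m, T n⁆ = (ginner γ n) • T (m + n)) ∧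
  (∀ r n, r ∉ Rgrp h k → n ∈ Rgrp h k → ⁅L r, T n⁆ = 0)

attribute [local instance 100] LieRing.ofAssociativeRing


/-
On `V(α, β, W)` the operator `L_0` acts on `W_ū ⊗ t^u` by the scalar `(γ | α + u)`, and these
scalars are pairwise distinct because `γ` is generic; so a nonzero submodule `U` contains some
`w ⊗ t^u` with `w ≠ 0`. For each class `ū` collect the `w ∈ W_ū` with `w ⊗ t^{u'} ∈ U` for all
`u' ∈ u + R`. As `L_r (w ⊗ t^u) = X^r w ⊗ t^{r+u}` for `r ∉ R`, the sum `S` of these spaces is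
stable under every `X^r` with `r ∉ R`. The `X^r` span `gl_N`, and the identity matrix acts on `W`
by a scalar (Schur's lemma in Dixmier's form: `W` has countable dimension while `ℂ` is
uncountable), so `S` is a graded `gl_N`-submodule of `W`. If `S = W`, then `U` contains every
`W_ū ⊗ t^u`, i.e. `U = V`. If `S = 0`, then every `X^r` with `r ∉ R` kills `w`, so `ℂ w` is a
graded submodule and `dim W = 1`.
-/

section Spectrum

open Polynomial

theorem isUnit_aeval_of_spectrum_eq_empty {K A : Type*} [Field K] [IsAlgClosed K] [Ring A]
    [Algebra K A] {a : A} (ha : spectrum K a = ∅) {p : K[X]} (hp : p ≠ 0) :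
    IsUnit (aeval a p) := by
  rcases le_or_gt (degree p) 0 with hdeg | hdeg
  · rw [eq_C_of_degree_le_zero hdeg, aeval_C]
    refine (isUnit_iff_ne_zero.mpr fun h0 => hp ?_).map (algebraMap K A)
    rw [eq_C_of_degree_le_zero hdeg, h0, C_0]
  · rw [← spectrum.zero_notMem_iff K, spectrum.map_polynomial_aeval_of_degree_pos a p hdeg, ha,
      Set.image_empty]
    exact Set.notMem_empty 0

namespace Module.End

variable {K M : Type*} [Field K] [AddCommGroup M] [Module K M]

theorem linearIndependent_of_sub_algebraMap_apply_eq [IsAlgClosed K] {f : Module.End K M}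
    (hf : spectrum K f = ∅) {m : M} (hm : m ≠ 0) {ξ : K → M}
    (hξ : ∀ t, (f - algebraMap K _ t) (ξ t) = m) : LinearIndependent K ξ := by
  classical
  rw [linearIndependent_iff']
  intro s g hsum t₀ ht₀
  set P : K[X] := ∑ t ∈ s, C (g t) * ∏ t' ∈ s.erase t, (X - C t')
  -- apply `∏_{t ∈ s} (f - t)` to the relation `∑ g t • ξ t = 0`
  have hPm : aeval f P m = 0 := by
    calc aeval f P m = aeval f (∏ t ∈ s, (X - C t)) (∑ t ∈ s, g t • ξ t) := by
          simp only [P, map_sum, map_mul, aeval_C, LinearMap.sum_apply, map_smul]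
          refine Finset.sum_congr rfl fun t ht => ?_
          rw [← Finset.prod_erase_mul s _ ht, map_mul, map_sub, aeval_X, aeval_C,
            Module.End.mul_apply, Module.End.mul_apply, hξ, Module.algebraMap_end_apply]
      _ = 0 := by rw [hsum, map_zero]
  have hP : P = 0 := by
    by_contra hP
    exact hm ((Module.End.isUnit_iff _).mp (isUnit_aeval_of_spectrum_eq_empty hf hP)
      |>.injective (hPm.trans (map_zero _).symm))
  have heval : eval t₀ P = g t₀ * ∏ t' ∈ s.erase t₀, (t₀ - t') := by
    simp only [P, eval_finsetSum, eval_mul, eval_C, eval_prod, eval_sub, eval_X]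
    refine Finset.sum_eq_single t₀ (fun t ht hne => ?_) (absurd ht₀)
    rw [Finset.prod_eq_zero (Finset.mem_erase.mpr ⟨Ne.symm hne, ht₀⟩) (sub_self t₀), mul_zero]
  rw [hP, eval_zero] at heval
  refine (mul_eq_zero.mp heval.symm).resolve_right ?_
  exact Finset.prod_ne_zero_iff.mpr fun t' ht' => sub_ne_zero.mpr (Finset.ne_of_mem_erase ht').symm

theorem spectrum_nonempty_of_rank_le_aleph0 [IsAlgClosed K] [Uncountable K] [Nontrivial M]
    (hM : Module.rank K M ≤ Cardinal.aleph0) (f : Module.End K M) : (spectrum K f).Nonempty := by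
  by_contra hf
  rw [Set.not_nonempty_iff_eq_empty] at hf
  obtain ⟨m, hm⟩ := exists_ne (0 : M)
  have hsurj (t : K) : ∃ x, (f - algebraMap K _ t) x = m := by
    have ht : IsUnit (algebraMap K _ t - f) := by
      by_contra h
      exact (hf ▸ spectrum.mem_iff.mpr h : t ∈ (∅ : Set K))
    exact ((Module.End.isUnit_iff _).mp (by simpa using ht.neg)).surjective m
  choose ξ hξ using hsurj
  have hcard := (linearIndependent_of_sub_algebraMap_apply_eq hf hm hξ).cardinal_lift_le_rank
  exact Cardinal.aleph0_lt_mk.not_ge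
    (Cardinal.lift_le_aleph0.mp (hcard.trans (Cardinal.lift_le_aleph0.mpr hM)))

end Module.End

theorem Submodule.exists_inf_ne_bot_of_apply_eq_smul {ι K M : Type*} [Field K] [AddCommGroup M]
    [Module K M] {N : ι → Submodule K M} (hN : iSup N = ⊤) {f : Module.End K M} {e : ι → K}
    (he : Function.Injective e) (hf : ∀ i, ∀ x ∈ N i, f x = e i • x) {U : Submodule K M}
    (hU : U ≤ U.comap f) (hU0 : U ≠ ⊥) : ∃ i, U ⊓ N i ≠ ⊥ := by
  classical
  obtain ⟨v, hvU, hv0⟩ := U.ne_bot_iff.mp hU0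
  obtain ⟨c, hcN, rfl⟩ := (Submodule.mem_iSup_iff_exists_finsupp N v).mp (hN ▸ Submodule.mem_top)
  obtain ⟨i, hi⟩ : ∃ i, c i ≠ 0 := by
    by_contra! h
    exact hv0 (by simp [Finsupp.sum, h])
  -- a polynomial in `f` killing every component of `v` except the `i`-th one
  set p : K[X] := ∏ j ∈ c.support.erase i, (X - C (e j))
  have hp : aeval f p (c.sum fun _ x => x) = eval (e i) p • c i := by
    rw [Finsupp.sum, map_sum, Finset.sum_eq_single i]
    · exact Module.End.aeval_apply_of_mem_apply_eq_smul (hf i _ (hcN i))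
    · intro j hj hji
      rw [Module.End.aeval_apply_of_mem_apply_eq_smul (hf j _ (hcN j)), eval_prod,
        Finset.prod_eq_zero (Finset.mem_erase.mpr ⟨hji, hj⟩) (by simp), zero_smul]
    · exact fun hi' => absurd (Finsupp.mem_support_iff.mpr hi) hi'
  have hpi : eval (e i) p ≠ 0 := by
    simp only [p, eval_prod, eval_sub, eval_X, eval_C]
    exact Finset.prod_ne_zero_iff.mpr fun j hj =>
      sub_ne_zero.mpr (he.ne (Finset.ne_of_mem_erase hj).symm)
  refine ⟨i, (Submodule.ne_bot_iff _).mpr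
    ⟨eval (e i) p • c i, ⟨?_, (N i).smul_mem _ (hcN i)⟩, smul_ne_zero hpi hi⟩⟩
  rw [← hp]
  exact aeval_apply_smul_mem_of_le_comap hvU p f hU

end Spectrum

section Graded

variable {ι R M : Type*} [Ring R] [AddCommGroup M] [Module R M] {G : ι → Submodule R M}

theorem Submodule.span_eq_iSup_inf_of_forall_exists_mem {T : Set M}
    (hT : ∀ t ∈ T, ∃ i, t ∈ G i) : span R T = ⨆ i, span R T ⊓ G i := by
  refine le_antisymm (span_le.mpr fun t ht => ?_) (iSup_le fun i => inf_le_left)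
  obtain ⟨i, hi⟩ := hT t ht
  exact le_iSup (fun i => span R T ⊓ G i) i ⟨subset_span ht, hi⟩

theorem Submodule.iSup_eq_iSup_inf_of_le {P : ι → Submodule R M} (hP : ∀ i, P i ≤ G i) :
    ⨆ i, P i = ⨆ i, (⨆ j, P j) ⊓ G i :=
  le_antisymm (iSup_mono fun i => le_inf (le_iSup P i) (hP i)) (iSup_le fun _ => inf_le_left)

theorem iSupIndep.mem_of_mem_iSup_of_le (hG : iSupIndep G) {P : ι → Submodule R M}
    (hP : ∀ i, P i ≤ G i) {i : ι} {x : M} (hxG : x ∈ G i) (hxP : x ∈ ⨆ j, P j) : x ∈ P i := by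
  rw [iSup_split_single P i, Submodule.mem_sup] at hxP
  obtain ⟨y, hy, z, hz, rfl⟩ := hxP
  have hz0 : z = 0 := by
    refine Submodule.disjoint_def.mp (hG i) z ?_ (iSup₂_mono (fun j _ => hP j) hz)
    simpa using sub_mem hxG (hP i hy)
  rwa [hz0, add_zero]

theorem LinearMap.range_eq_iSup_inf (hG : iSup G = ⊤) {f : Module.End R M}
    (hf : ∀ i, G i ≤ (G i).comap f) : range f = ⨆ i, range f ⊓ G i := by
  refine le_antisymm ?_ (iSup_le fun i => inf_le_left)
  calc range f = ⨆ i, (G i).map f := by rw [range_eq_map, ← hG, Submodule.map_iSup]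
    _ ≤ ⨆ i, range f ⊓ G i :=
      iSup_mono fun i => le_inf map_le_range (Submodule.map_le_iff_le_comap.mpr (hf i))

theorem LinearMap.ker_eq_iSup_inf [DecidableEq ι] (hG : DirectSum.IsInternal G)
    {f : Module.End R M} (hf : ∀ i, G i ≤ (G i).comap f) : ker f = ⨆ i, ker f ⊓ G i := by
  refine le_antisymm (fun x hx => ?_) (iSup_le fun i => inf_le_left)
  obtain ⟨c, hcG, rfl⟩ :=
    (Submodule.mem_iSup_iff_exists_finsupp G x).mp (hG.submodule_iSup_eq_top ▸ Submodule.mem_top)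
  have hfc := (iSupIndep_iff_finsetSum_eq_zero_imp_eq_zero G).mp hG.submodule_iSupIndep
    c.support (fun i => f (c i)) (fun i _ => hf i (hcG i)) (by rwa [← map_sum])
  exact Submodule.sum_mem _ fun i hi => le_iSup (fun i => ker f ⊓ G i) i ⟨hfc i hi, hcG i⟩

theorem nontrivial_of_iSup_eq_top {V : Type*} [Nontrivial M] [AddCommGroup V] [Module R V]
    (hG : iSup G = ⊤) (f : ι → M →ₗ[R] V) (hf : ∀ i, ∀ w ∈ G i, f i w = 0 → w = 0) :
    Nontrivial V := by
  obtain ⟨i, hi⟩ : ∃ i, G i ≠ ⊥ :=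
    not_forall.mp fun hall => top_ne_bot (hG ▸ iSup_eq_bot.mpr hall)
  obtain ⟨w, hw, hw0⟩ := (Submodule.ne_bot_iff _).mp hi
  exact nontrivial_of_ne _ 0 fun h0 => hw0 (hf i w hw h0)

end Graded

section GradedLieModule

variable {K L M ι : Type*} [Field K] [LieRing L] [LieAlgebra K L] [AddCommGroup M] [Module K M]

def IsGradedIrreducible (ρ : L →ₗ⁅K⁆ Module.End K M) (G : ι → Submodule K M) : Prop :=
  ∀ S : Submodule K M, (∀ a, ∀ w ∈ S, ρ a w ∈ S) → S = ⨆ i, S ⊓ G i → S = ⊥ ∨ S = ⊤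

theorem LieHom.apply_mem_of_span_eq_top {J : Type*} (ρ : L →ₗ⁅K⁆ Module.End K M) {b : J → L}
    (hb : Submodule.span K (Set.range b) = ⊤) {S : Submodule K M}
    (hS : ∀ j, ∀ w ∈ S, ρ (b j) w ∈ S) (a : L) : ∀ w ∈ S, ρ a w ∈ S := by
  have ha : a ∈ Submodule.span K (Set.range b) := hb ▸ Submodule.mem_top
  induction ha using Submodule.span_induction with
  | mem x hx => obtain ⟨j, rfl⟩ := hx; exact hS j
  | zero => simp
  | add x y _ _ hx hy => intro w hw; simpa using S.add_mem (hx w hw) (hy w hw)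
  | smul c x _ hx => intro w hw; simpa using S.smul_mem c (hx w hw)

variable {ρ : L →ₗ⁅K⁆ Module.End K M} {G : ι → Submodule K M}

theorem IsGradedIrreducible.rank_le_aleph0 {J : Type*} [Countable J]
    (hirr : IsGradedIrreducible ρ G) (hG : iSup G = ⊤) {b : J → L}
    (hb : Submodule.span K (Set.range b) = ⊤) (hbG : ∀ j i, ∃ i', G i ≤ (G i').comap (ρ (b j))) :
    Module.rank K M ≤ Cardinal.aleph0 := by
  by_cases hM : ∀ i, G i = ⊥
  · rw [← rank_top, ← hG, iSup_eq_bot.mpr hM, rank_bot]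
    exact Cardinal.aleph0_pos.le
  obtain ⟨i, hi⟩ := not_forall.mp hM
  obtain ⟨w, hw, hw0⟩ := (G i).ne_bot_iff.mp hi
  let word (l : List J) : M := (l.map fun j => ρ (b j)).prod w
  let S := Submodule.span K (Set.range word)
  have hword_mem (l : List J) : ∃ i', word l ∈ G i' := by
    induction l with
    | nil => exact ⟨i, hw⟩
    | cons j l ih =>
      obtain ⟨i', hi'⟩ := ih
      obtain ⟨i'', hi''⟩ := hbG j i'
      exact ⟨i'', hi'' hi'⟩
  have hS_stable (j : J) : ∀ x ∈ S, ρ (b j) x ∈ S := by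
    refine fun x hx => (Submodule.span_le.mpr ?_ : S ≤ S.comap (ρ (b j))) hx
    rintro _ ⟨l, rfl⟩
    exact Submodule.subset_span ⟨j :: l, rfl⟩
  have hS : S = ⊤ := by
    refine (hirr S (ρ.apply_mem_of_span_eq_top hb hS_stable)
      (Submodule.span_eq_iSup_inf_of_forall_exists_mem ?_)).resolve_left ?_
    · rintro _ ⟨l, rfl⟩
      exact hword_mem l
    · exact (Submodule.ne_bot_iff S).mpr ⟨w, Submodule.subset_span ⟨[], rfl⟩, hw0⟩
  calc Module.rank K M = Module.rank K S := by rw [hS, rank_top]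
    _ ≤ Cardinal.mk (Set.range word) := rank_span_le _
    _ ≤ Cardinal.aleph0 := Cardinal.mk_le_aleph0_iff.mpr (Set.countable_range word).to_subtype

theorem IsGradedIrreducible.exists_eq_algebraMap [IsAlgClosed K] [Uncountable K] [Nontrivial M]
    [DecidableEq ι] (hirr : IsGradedIrreducible ρ G) (hG : DirectSum.IsInternal G)
    (hM : Module.rank K M ≤ Cardinal.aleph0) {x : L} (hx : ∀ a : L, ⁅x, a⁆ = 0)
    (hxG : ∀ i, G i ≤ (G i).comap (ρ x)) : ∃ c : K, ρ x = algebraMap K _ c := by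
  obtain ⟨t, ht⟩ := Module.End.spectrum_nonempty_of_rank_le_aleph0 hM (ρ x)
  set g := algebraMap K _ t - ρ x
  have hcomm (a : L) (w : M) : g (ρ a w) = ρ a (g w) := by
    have := ρ.map_lie x a
    rw [hx, map_zero, LieRing.of_associative_ring_bracket, eq_comm, sub_eq_zero] at this
    simpa [g] using congrArg (· w) this
  have hgG (i : ι) : G i ≤ (G i).comap g := fun w hw =>
    sub_mem ((G i).smul_mem t hw) (hxG i hw)
  rcases hirr _ (fun a w hw => by rw [LinearMap.mem_ker] at hw ⊢; rw [hcomm, hw, map_zero])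
    (LinearMap.ker_eq_iSup_inf hG hgG) with hker | hker
  · rcases hirr _ (fun a _ hw => by
        obtain ⟨v, rfl⟩ := LinearMap.mem_range.mp hw; exact ⟨ρ a v, hcomm a v⟩)
      (LinearMap.range_eq_iSup_inf hG.submodule_iSup_eq_top hgG) with hrange | hrange
    · exact ⟨t, (sub_eq_zero.mp (LinearMap.range_eq_bot.mp hrange)).symm⟩
    · exact absurd ((Module.End.isUnit_iff g).mpr
        ⟨LinearMap.ker_eq_bot.mp hker, LinearMap.range_eq_top.mp hrange⟩) (spectrum.mem_iff.mp ht)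
  · exact ⟨t, (sub_eq_zero.mp (LinearMap.ker_eq_top.mp hker)).symm⟩

end GradedLieModule

theorem IsPrimitiveRoot.sum_zpow_mul_sub {K : Type*} [Field K] {ζ : K} {k : ℕ}
    (hζ : IsPrimitiveRoot ζ k) (j j₀ : Fin k) :
    ∑ b : Fin k, ζ ^ ((b : ℤ) * (j - j₀)) = if j = j₀ then (k : K) else 0 := by
  simp_rw [mul_comm (_ : ℤ), zpow_mul, zpow_natCast]
  rw [Fin.sum_univ_eq_sum_range (fun b => (ζ ^ ((j : ℤ) - j₀)) ^ b)]
  split_ifs with hj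
  · simp [hj]
  · have hne : ζ ^ ((j : ℤ) - j₀) ≠ 1 := by
      rw [Ne, hζ.zpow_eq_one_iff_dvd]
      intro hdvd
      have := j.isLt; have := j₀.isLt
      exact hj (Fin.ext (by
        have := Int.eq_zero_of_abs_lt_dvd hdvd (abs_lt.mpr ⟨by omega, by omega⟩); omega))
    rw [geom_sum_eq hne, ← zpow_natCast, ← zpow_mul, mul_comm, zpow_mul, zpow_natCast,
      hζ.pow_eq_one, one_zpow, sub_self, zero_div]

section QuantumTorus

variable {d z : ℕ} (h : 2*z ≤ d) (k : Fin z → ℕ) (q : Fin z → ℂ)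

lemma repZ_p1 (n : Fin d → ℤ) (i : Fin z) : repZ h k n (p1 h i) = n (p1 h i) % (k i : ℤ) := by
  have hi := i.2
  simp only [repZ]
  rw [dif_pos (by simp only [p1]; omega)]
  congr 4
  simp only [p1]; omega

lemma repZ_p2 (n : Fin d → ℤ) (i : Fin z) : repZ h k n (p2 h i) = n (p2 h i) % (k i : ℤ) := by
  have hi := i.2
  simp only [repZ]
  rw [dif_pos (by simp only [p2]; omega)]
  congr 4
  simp only [p2]; omega

lemma sub_repZ_mem (n : Fin d → ℤ) : n - repZ h k n ∈ Rgrp h k := fun i =>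
  ⟨by simp [repZ_p1, Int.emod_def], by simp [repZ_p2, Int.emod_def]⟩

lemma dvd_apply_of_mem_Rgrp {m : Fin d → ℤ} (hm : m ∈ Rgrp h k) (l : Fin d)
    (hl : (l : ℕ) < 2 * z) : ((k ⟨l / 2, by omega⟩ : ℕ) : ℤ) ∣ m l := by
  obtain ⟨h1, h2⟩ := hm ⟨l / 2, by omega⟩
  rcases Nat.even_or_odd (l : ℕ) with ⟨t, ht⟩ | ⟨t, ht⟩
  · convert h1 using 2; ext; simp [p1]; omega
  · convert h2 using 2; ext; simp [p2]; omega

lemma repZ_eq_of_sub_mem {u u' : Fin d → ℤ} (hu : u - u' ∈ Rgrp h k) :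
    repZ h k u = repZ h k u' := by
  funext l
  by_cases hl : (l : ℕ) < 2 * z
  · obtain ⟨c, hc⟩ := dvd_apply_of_mem_Rgrp h k hu l hl
    rw [Pi.sub_apply, sub_eq_iff_eq_add'] at hc
    simp only [repZ, dif_pos hl, hc, Int.add_mul_emod_self_left]
  · simp only [repZ, dif_neg hl]

lemma Xmat_add_of_mem (hk : ∀ i, 0 < k i) (hq : ∀ i, IsPrimitiveRoot (q i) (k i))
    (r : Fin d → ℤ) {m : Fin d → ℤ} (hm : m ∈ Rgrp h k) : Xmat h k q (r + m) = Xmat h k q r := by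
  ext j l
  simp only [Xmat, Matrix.of_apply]
  refine Finset.prod_congr rfl fun i _ => ?_
  obtain ⟨⟨c₁, hc₁⟩, ⟨c₂, hc₂⟩⟩ := hm i
  rw [Pi.add_apply, Pi.add_apply, hc₁, hc₂, ← add_assoc, Int.add_mul_emod_self_left, add_mul,
    zpow_add₀ ((hq i).ne_zero (hk i).ne'), mul_assoc (k i : ℤ), zpow_mul (q i) (k i), zpow_natCast,
    (hq i).pow_eq_one, one_zpow, mul_one]

lemma Xmat_zero : Xmat h k q 0 = 1 := by
  ext j l
  have hj (i : Fin z) : ((j i : ℕ) : ℤ) % (k i : ℤ) = j i :=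
    Int.emod_eq_of_lt (Int.natCast_nonneg _) (Int.ofNat_lt.mpr (j i).isLt)
  simp only [Xmat, Matrix.of_apply, Pi.zero_apply, zero_mul, zpow_zero, one_mul, add_zero, hj,
    Nat.cast_inj, Fin.val_inj, Fintype.prod_ite_zero, Finset.prod_const_one, Matrix.one_apply,
    funext_iff, eq_comm]

lemma exists_apply_p1_p2 (a e : Fin z → ℤ) :
    ∃ n : Fin d → ℤ, ∀ i, n (p1 h i) = a i ∧ n (p2 h i) = e i := by
  refine ⟨fun l => if hl : (l : ℕ) < 2 * z then
    (if (l : ℕ) % 2 = 0 then a ⟨l / 2, by omega⟩ else e ⟨l / 2, by omega⟩) else 0,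
    fun i => ⟨?_, ?_⟩⟩ <;> have := i.2 <;> dsimp only
  · rw [dif_pos (by simp only [p1]; omega), if_pos (by simp only [p1]; omega)]
    congr; simp only [p1]; omega
  · rw [dif_pos (by simp only [p2]; omega), if_neg (by simp only [p2]; omega)]
    congr; simp only [p2]; omega

theorem span_range_Xmat (hk : ∀ i, 0 < k i) (hq : ∀ i, IsPrimitiveRoot (q i) (k i)) :
    Submodule.span ℂ (Set.range (Xmat h k q)) = ⊤ := by
  refine eq_top_iff.mpr fun A _ => ?_
  rw [Matrix.matrix_eq_sum_single A]
  refine Submodule.sum_mem _ fun j₀ _ => Submodule.sum_mem _ fun l₀ _ => ?_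
  rw [← mul_one (A j₀ l₀), ← smul_eq_mul, ← Matrix.smul_single]
  refine Submodule.smul_mem _ _ ?_
  choose n hn using fun a : (i : Fin z) → Fin (k i) =>
    exists_apply_p1_p2 h (fun i => a i) (fun i => (l₀ i : ℤ) - j₀ i)
  -- discrete Fourier inversion in each tensor factor
  have key : ∑ a, (∏ i, q i ^ (-(a i : ℤ) * j₀ i)) • Xmat h k q (n a)
      = (∏ i, (k i : ℂ)) • Matrix.single j₀ l₀ 1 := by
    ext j l
    set F : (i : Fin z) → Fin (k i) → ℂ := fun i b => q i ^ (-(b : ℤ) * j₀ i) *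
      (q i ^ ((b : ℤ) * j i) * if (l i : ℤ) = (j i + ((l₀ i : ℤ) - j₀ i)) % k i then 1 else 0)
    have hfactor (i : Fin z) : ∑ b, F i b = if j i = j₀ i ∧ l i = l₀ i then (k i : ℂ) else 0 := by
      simp_rw [F, ← mul_assoc, ← zpow_add₀ ((hq i).ne_zero (hk i).ne'), ← Finset.sum_mul,
        show ∀ b : ℤ, -b * j₀ i + b * j i = b * (j i - j₀ i) from fun b => by ring,
        (hq i).sum_zpow_mul_sub]
      by_cases hj : j i = j₀ i
      · have hl₀ : ((l₀ i : ℕ) : ℤ) % (k i : ℤ) = l₀ i :=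
          Int.emod_eq_of_lt (Int.natCast_nonneg _) (Int.ofNat_lt.mpr (l₀ i).isLt)
        simp [hj, hl₀, Fin.val_inj]
      · simp [hj]
    have hentry (a : (i : Fin z) → Fin (k i)) :
        ((∏ i, q i ^ (-(a i : ℤ) * j₀ i)) • Xmat h k q (n a)) j l = ∏ i, F i (a i) := by
      simp only [Matrix.smul_apply, Xmat, Matrix.of_apply, hn, smul_eq_mul,
        ← Finset.prod_mul_distrib, F]
    rw [Matrix.sum_apply, Finset.sum_congr rfl fun a _ => hentry a, ← Fintype.prod_sum F,
      Matrix.smul_apply, Matrix.single_apply]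
    simp only [hfactor, Fintype.prod_ite_zero, smul_eq_mul, mul_ite, mul_one, mul_zero, funext_iff,
      forall_and, eq_comm]
  have hN : (∏ i, (k i : ℂ)) ≠ 0 :=
    Finset.prod_ne_zero_iff.mpr fun i _ => by exact_mod_cast (hk i).ne'
  rw [← inv_smul_smul₀ hN (Matrix.single j₀ l₀ 1), ← key]
  exact Submodule.smul_mem _ _ (Submodule.sum_mem _ fun a _ =>
    Submodule.smul_mem _ _ (Submodule.subset_span ⟨n a, rfl⟩))

lemma Xmat_eq_one_of_mem (hk : ∀ i, 0 < k i) (hq : ∀ i, IsPrimitiveRoot (q i) (k i))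
    {m : Fin d → ℤ} (hm : m ∈ Rgrp h k) : Xmat h k q m = 1 := by
  rw [← Xmat_zero h k q, ← Xmat_add_of_mem h k q hk hq 0 hm, zero_add]

lemma ginner_injective {γ : Fin d → ℂ} (hγ : LinearIndependent ℚ γ) :
    Function.Injective (ginner γ) := by
  intro u u' huu
  have := Fintype.linearIndependent_iff.mp hγ (fun i => ((u i - u' i : ℤ) : ℚ)) (by
    simpa [ginner, Rat.smul_def, mul_sub, mul_comm, Finset.sum_sub_distrib] using
      sub_eq_zero.mpr huu)
  funext i
  exact sub_eq_zero.mp (by exact_mod_cast this i)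

end QuantumTorus

section TensorFields

variable {d z : ℕ} (h : 2*z ≤ d) (k : Fin z → ℕ) (q : Fin z → ℂ)
  {W : Type*} [AddCommGroup W] [Module ℂ W]
  (ρ : Matrix ((i : Fin z) → Fin (k i)) ((i : Fin z) → Fin (k i)) ℂ →ₗ⁅ℂ⁆ Module.End ℂ W)
  (Wgr : (Fin d → ℤ) → Submodule ℂ W)
  {V : Type*} [AddCommGroup V] [Module ℂ V] (L : (Fin d → ℤ) → Module.End ℂ V)
  (ι : (Fin d → ℤ) → W →ₗ[ℂ] V)

lemma apply_mem_of_forall_not_mem_Rgrp (hk : ∀ i, 0 < k i)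
    (hq : ∀ i, IsPrimitiveRoot (q i) (k i)) {c : ℂ} (hc : ρ 1 = algebraMap ℂ _ c)
    {S : Submodule ℂ W} (hS : ∀ r ∉ Rgrp h k, ∀ w ∈ S, ρ (Xmat h k q r) w ∈ S) :
    ∀ a, ∀ w ∈ S, ρ a w ∈ S := by
  refine ρ.apply_mem_of_span_eq_top (span_range_Xmat h k q hk hq) fun n w hw => ?_
  by_cases hn : n ∈ Rgrp h k
  · rw [Xmat_eq_one_of_mem h k q hk hq hn, hc, Module.algebraMap_end_apply]
    exact S.smul_mem c hw
  · exact hS n hn w hw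

/-- The vectors `w ∈ W_ū` with `w ⊗ t^{u'} ∈ U` for every `u' ∈ u + R`. -/
def tensorSlice (U : Submodule ℂ V) (u : Fin d → ℤ) : Submodule ℂ W :=
  Wgr u ⊓ ⨅ (u' : Fin d → ℤ) (_ : u' - u ∈ Rgrp h k), U.comap (ι u')

variable {h k q ρ Wgr L ι}

lemma mem_tensorSlice {U : Submodule ℂ V} {u : Fin d → ℤ} {w : W} :
    w ∈ tensorSlice h k Wgr ι U u ↔ w ∈ Wgr u ∧ ∀ u', u' - u ∈ Rgrp h k → ι u' w ∈ U := by
  simp [tensorSlice, Submodule.mem_iInf]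

lemma tensorSlice_congr (hWrep : ∀ u, Wgr u = Wgr (repZ h k u)) (U : Submodule ℂ V)
    {u v : Fin d → ℤ} (huv : u - v ∈ Rgrp h k) :
    tensorSlice h k Wgr ι U u = tensorSlice h k Wgr ι U v := by
  have hW : Wgr u = Wgr v := by rw [hWrep u, hWrep v, repZ_eq_of_sub_mem h k huv]
  have hR (u' : Fin d → ℤ) : u' - u ∈ Rgrp h k ↔ u' - v ∈ Rgrp h k := by
    rw [show u' - v = (u' - u) + (u - v) by abel]
    exact (AddSubgroup.add_mem_cancel_right _ huv).symm
  ext w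
  simp only [mem_tensorSlice, hW, hR]

lemma Xmat_apply_mem_tensorSlice (hk : ∀ i, 0 < k i) (hq : ∀ i, IsPrimitiveRoot (q i) (k i))
    (hWgraded : ∀ r u, ∀ w ∈ Wgr u, ρ (Xmat h k q r) w ∈ Wgr (r + u))
    (hLr : ∀ r, r ∉ Rgrp h k → ∀ u, ∀ w ∈ Wgr u, L r (ι u w) = ι (r + u) (ρ (Xmat h k q r) w))
    {U : Submodule ℂ V} (hU : ∀ x, ∀ v ∈ U, L x v ∈ U) {r u : Fin d → ℤ} (hr : r ∉ Rgrp h k)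
    {w : W} (hw : w ∈ Wgr u) (hwU : ι u w ∈ U) :
    ρ (Xmat h k q r) w ∈ tensorSlice h k Wgr ι U (r + u) := by
  refine mem_tensorSlice.mpr ⟨hWgraded r u w hw, fun u' hu' => ?_⟩
  -- `u' = r' + u` with `r' ≡ r` modulo `R`, so `L_{r'}` carries `w ⊗ t^u` to `X^r w ⊗ t^{u'}`
  have hr' : u' - u = r + (u' - (r + u)) := by abel
  have hr'R : u' - u ∉ Rgrp h k := by
    rw [hr']; exact fun hmem => hr ((AddSubgroup.add_mem_cancel_right _ hu').mp hmem)
  have := hU (u' - u) _ hwU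
  rwa [hLr _ hr'R u w hw, sub_add_cancel, hr', Xmat_add_of_mem h k q hk hq r hu'] at this

variable (h k Wgr ι) in
def tensorSliceSup (U : Submodule ℂ V) : Submodule ℂ W :=
  ⨆ s : {s : Fin d → ℤ // inGamma0 h k s}, tensorSlice h k Wgr ι U s.1

lemma tensorSlice_le_tensorSliceSup (hk : ∀ i, 0 < k i)
    (hWrep : ∀ u, Wgr u = Wgr (repZ h k u)) (U : Submodule ℂ V) (u : Fin d → ℤ) :
    tensorSlice h k Wgr ι U u ≤ tensorSliceSup h k Wgr ι U :=
  (tensorSlice_congr hWrep U (sub_repZ_mem h k u)).le.trans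
    (le_iSup (fun s : {s // inGamma0 h k s} => tensorSlice h k Wgr ι U s.1)
      ⟨repZ h k u, repZ_mem h k hk u⟩)

lemma tensorSliceSup_eq_iSup_inf (U : Submodule ℂ V) :
    tensorSliceSup h k Wgr ι U =
      ⨆ s : {s : Fin d → ℤ // inGamma0 h k s}, tensorSliceSup h k Wgr ι U ⊓ Wgr s.1 :=
  Submodule.iSup_eq_iSup_inf_of_le fun _ => inf_le_left

lemma Xmat_apply_mem_tensorSliceSup (hk : ∀ i, 0 < k i)
    (hq : ∀ i, IsPrimitiveRoot (q i) (k i)) (hWrep : ∀ u, Wgr u = Wgr (repZ h k u))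
    (hWgraded : ∀ r u, ∀ w ∈ Wgr u, ρ (Xmat h k q r) w ∈ Wgr (r + u))
    (hLr : ∀ r, r ∉ Rgrp h k → ∀ u, ∀ w ∈ Wgr u, L r (ι u w) = ι (r + u) (ρ (Xmat h k q r) w))
    {U : Submodule ℂ V} (hU : ∀ x, ∀ v ∈ U, L x v ∈ U) {r : Fin d → ℤ} (hr : r ∉ Rgrp h k) :
    ∀ w ∈ tensorSliceSup h k Wgr ι U, ρ (Xmat h k q r) w ∈ tensorSliceSup h k Wgr ι U := by
  refine fun w hw => (iSup_le fun s w hw => ?_ : tensorSliceSup h k Wgr ι U ≤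
    (tensorSliceSup h k Wgr ι U).comap (ρ (Xmat h k q r))) hw
  obtain ⟨hwW, hwU⟩ := mem_tensorSlice.mp hw
  exact tensorSlice_le_tensorSliceSup hk hWrep U _ <|
    Xmat_apply_mem_tensorSlice hk hq hWgraded hLr hU hr hwW (hwU _ (by simp))

lemma rank_le_one_of_tensorSliceSup_eq_bot (hk : ∀ i, 0 < k i)
    (hq : ∀ i, IsPrimitiveRoot (q i) (k i)) (hWrep : ∀ u, Wgr u = Wgr (repZ h k u))
    (hWgraded : ∀ r u, ∀ w ∈ Wgr u, ρ (Xmat h k q r) w ∈ Wgr (r + u))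
    (hirr : IsGradedIrreducible ρ fun s : {s : Fin d → ℤ // inGamma0 h k s} => Wgr s.1)
    {c : ℂ} (hc : ρ 1 = algebraMap ℂ _ c)
    (hLr : ∀ r, r ∉ Rgrp h k → ∀ u, ∀ w ∈ Wgr u, L r (ι u w) = ι (r + u) (ρ (Xmat h k q r) w))
    {U : Submodule ℂ V} (hU : ∀ x, ∀ v ∈ U, L x v ∈ U) (hS : tensorSliceSup h k Wgr ι U = ⊥)
    {u : Fin d → ℤ} {w : W} (hw : w ∈ Wgr u) (hw0 : w ≠ 0) (hwU : ι u w ∈ U) :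
    Module.rank ℂ W ≤ 1 := by
  have hX (r : Fin d → ℤ) (hr : r ∉ Rgrp h k) : ρ (Xmat h k q r) w = 0 := by
    have := tensorSlice_le_tensorSliceSup hk hWrep U _
      (Xmat_apply_mem_tensorSlice hk hq hWgraded hLr hU hr hw hwU)
    rwa [hS, Submodule.mem_bot] at this
  have hspan : ℂ ∙ w = ⊤ := by
    refine (hirr _ (apply_mem_of_forall_not_mem_Rgrp h k q ρ hk hq hc fun r hr x hx => ?_)
      (Submodule.span_eq_iSup_inf_of_forall_exists_mem ?_)).resolve_left ?_
    · obtain ⟨a, rfl⟩ := Submodule.mem_span_singleton.mp hx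
      rw [map_smul, hX r hr, smul_zero]
      exact zero_mem _
    · rintro x rfl
      exact ⟨⟨repZ h k u, repZ_mem h k hk u⟩, hWrep u ▸ hw⟩
    · exact Submodule.span_singleton_eq_bot.not.mpr hw0
  rw [← rank_top, ← hspan]
  exact (rank_span_le _).trans (Cardinal.mk_singleton w).le

lemma exists_ne_zero_tensor_mem {γ α : Fin d → ℂ} {β : ℂ} (hγ : LinearIndependent ℚ γ)
    (hVint : ⨆ u, (Wgr u).map (ι u) = ⊤)
    (hLm : ∀ m ∈ Rgrp h k, ∀ u, ∀ w ∈ Wgr u,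
      L m (ι u w) = (∑ i, γ i * (α i + (u i : ℂ) + β * (m i : ℂ))) • ι (m + u) w)
    {U : Submodule ℂ V} (hU : ∀ x, ∀ v ∈ U, L x v ∈ U) (hU0 : U ≠ ⊥) :
    ∃ u, ∃ w ∈ Wgr u, w ≠ 0 ∧ ι u w ∈ U := by
  have hL0 (u : Fin d → ℤ) : ∀ v ∈ (Wgr u).map (ι u),
      L 0 v = (∑ i, γ i * α i + ginner γ u) • v := by
    rintro _ ⟨w, hw, rfl⟩
    rw [hLm 0 (zero_mem _) u w hw, zero_add]
    simp [ginner, mul_add, Finset.sum_add_distrib]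
  obtain ⟨u, hu⟩ := Submodule.exists_inf_ne_bot_of_apply_eq_smul hVint
    (fun u u' huu => ginner_injective hγ (add_left_cancel huu)) hL0 (fun v hv => hU 0 v hv) hU0
  obtain ⟨_, ⟨hvU, w, hw, rfl⟩, hv0⟩ := (Submodule.ne_bot_iff _).mp hu
  exact ⟨u, w, hw, fun h0 => hv0 (by rw [h0, map_zero]), hvU⟩

lemma eq_top_of_tensorSliceSup_eq_top [DecidableEq {s : Fin d → ℤ // inGamma0 h k s}]
    (hk : ∀ i, 0 < k i) (hWrep : ∀ u, Wgr u = Wgr (repZ h k u))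
    (hWint : DirectSum.IsInternal (fun s : {s : Fin d → ℤ // inGamma0 h k s} => Wgr s.1))
    (hVint : ⨆ u, (Wgr u).map (ι u) = ⊤) {U : Submodule ℂ V}
    (hU : tensorSliceSup h k Wgr ι U = ⊤) : U = ⊤ := by
  refine eq_top_iff.mpr (hVint ▸ iSup_le fun u => Submodule.map_le_iff_le_comap.mpr fun w hw => ?_)
  have hw' : w ∈ tensorSlice h k Wgr ι U (repZ h k u) := by
    refine hWint.submodule_iSupIndep.mem_of_mem_iSup_of_le
      (P := fun s => tensorSlice h k Wgr ι U s.1) (fun _ => inf_le_left) (i := ⟨repZ h k u, repZ_mem h k hk u⟩) ?_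
      (show w ∈ tensorSliceSup h k Wgr ι U from hU ▸ Submodule.mem_top)
    exact hWrep u ▸ hw
  rw [← tensorSlice_congr hWrep U (sub_repZ_mem h k u)] at hw'
  exact (mem_tensorSlice.mp hw').2 u (by simp)

end TensorFields

/-- Lemma 3.1.  If `W` is a `Γ`-graded irreducible `gl_N`-module with
`dim W > 1`, then for every `α ∈ ℂ^d` and `β ∈ ℂ` the `g`-module of tensor fields
`V(α,β,W)` is irreducible.  Here `V(α,β,W)` is presented as a vector space `V` with
operators `L x` (the action of the basis `L_x` of `g`), together with the structure maps
`ι u : W → V` realizing `V = ⊕_{u ∈ ℤ^d} W_{ū} ⊗ t^u` with the tensor-field action. -/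
theorem stmt1 (d z : ℕ) (h2z : 2*z ≤ d)
    (k : Fin z → ℕ) (hk : ∀ i, 0 < k i)
    (q : Fin z → ℂ) (hq : ∀ i, IsPrimitiveRoot (q i) (k i))
    (γ : Fin d → ℂ) (hγ : LinearIndependent ℚ γ)
    (α : Fin d → ℂ) (β : ℂ)
    -- `W` is a `Γ`-graded `gl_N`-module ...
    (W : Type*) [AddCommGroup W] [Module ℂ W]
    (ρ : Matrix ((i : Fin z) → Fin (k i)) ((i : Fin z) → Fin (k i)) ℂ →ₗ⁅ℂ⁆ Module.End ℂ W)
    (Wgr : (Fin d → ℤ) → Submodule ℂ W)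
    (hWrep : ∀ u, Wgr u = Wgr (repZ h2z k u))
    (hWint : DirectSum.IsInternal (fun s : {s : Fin d → ℤ // inGamma0 h2z k s} => Wgr s.1))
    (hWgraded : ∀ r u, ∀ w ∈ Wgr u, ρ (Xmat h2z k q r) w ∈ Wgr (r + u))
    -- ... which is `Γ`-graded irreducible ...
    (hWne : Nontrivial W)
    (hWirr : ∀ S : Submodule ℂ W, (∀ a, ∀ w ∈ S, ρ a w ∈ S) →
      (S = ⨆ s : {s : Fin d → ℤ // inGamma0 h2z k s}, S ⊓ Wgr s.1) → S = ⊥ ∨ S = ⊤)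
    -- ... with `dim W > 1`
    (hdim : 1 < Module.rank ℂ W)
    -- `V` is the module of tensor fields `V(α,β,W)`
    (V : Type*) [AddCommGroup V] [Module ℂ V]
    (L : (Fin d → ℤ) → Module.End ℂ V)
    (ι : (Fin d → ℤ) → W →ₗ[ℂ] V)
    (hVint : DirectSum.IsInternal (fun u : Fin d → ℤ => (Wgr u).map (ι u)))
    (hιinj : ∀ u, ∀ w ∈ Wgr u, ι u w = 0 → w = 0)
    (hLm : ∀ m ∈ Rgrp h2z k, ∀ u, ∀ w ∈ Wgr u,
      L m (ι u w) = (∑ i, γ i * (α i + (u i : ℂ) + β * (m i : ℂ))) • ι (m + u) w)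
    (hLr : ∀ r, r ∉ Rgrp h2z k → ∀ u, ∀ w ∈ Wgr u,
      L r (ι u w) = ι (r + u) (ρ (Xmat h2z k q r) w)) :
    -- conclusion: `V(α,β,W)` is an irreducible `g`-module
    Nontrivial V ∧ ∀ U : Submodule ℂ V, (∀ x, ∀ v ∈ U, L x v ∈ U) → U = ⊥ ∨ U = ⊤ := by
  have : Uncountable ℂ := Complex.ofReal_injective.uncountable
  have hirr : IsGradedIrreducible ρ fun s : {s // inGamma0 h2z k s} => Wgr s.1 := hWirr
  have hrank : Module.rank ℂ W ≤ Cardinal.aleph0 :=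
    hirr.rank_le_aleph0 hWint.submodule_iSup_eq_top (span_range_Xmat h2z k q hk hq)
      fun n s => ⟨⟨repZ h2z k (n + s.1), repZ_mem h2z k hk _⟩,
        fun w hw => hWrep _ ▸ hWgraded n s.1 w hw⟩
  obtain ⟨c, hc⟩ := hirr.exists_eq_algebraMap hWint hrank (x := 1) (fun a => by simp [Ring.lie_def])
    fun s w hw => by simpa [Xmat_zero] using hWgraded 0 s.1 w hw
  refine ⟨nontrivial_of_iSup_eq_top hWint.submodule_iSup_eq_top (fun s => ι s.1)
    fun s => hιinj s.1, fun U hU => ?_⟩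
  by_cases hU0 : U = ⊥
  · exact Or.inl hU0
  obtain ⟨u, w, hw, hw0, hwU⟩ := exists_ne_zero_tensor_mem hγ hVint.submodule_iSup_eq_top hLm hU hU0
  rcases hirr _ (apply_mem_of_forall_not_mem_Rgrp h2z k q ρ hk hq hc fun r hr =>
      Xmat_apply_mem_tensorSliceSup hk hq hWrep hWgraded hLr hU hr)
      (tensorSliceSup_eq_iSup_inf U) with hS | hS
  · exact absurd hdim (not_lt.mpr
      (rank_le_one_of_tensorSliceSup_eq_bot hk hq hWrep hWgraded hirr hc hLr hU hS hw hw0 hwU))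
  · exact Or.inr (eq_top_of_tensorSliceSup_eq_top hk hWrep hWint hVint.submodule_iSup_eq_top hS)
end
end

section
/- The derived subalgebra of 𝓛^x decomposes as [𝓛^x, 𝓛^x] = [𝓛^x_0, 𝓛^x_0] ⊕ (⊕_{j≥1} 𝓛^x_j); explicitly, [𝓛^x, 𝓛^x] is the direct sum of span{γ_j x_i d_γ − γ_i x_j d_γ : 1 ≤ i < j ≤ d} and span{x^m d_γ : m ∈ ℕ^d, |m| ≥ 2}. -/
/-!
A bracket of basis vectors of total degrees `a` and `c` is a combination of basis vectors of
degree `a + c - 1`, so the derived algebra lies in the span of the brackets of degree-one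
vectors, `[x_p d_γ, x_q d_γ] = γ_q x_p d_γ - γ_p x_q d_γ`, and of the vectors of degree `≥ 2`;
linear independence of the basis makes the two parts independent.

Conversely, fix `i₀` with `γ_{i₀} ≠ 0`. For `|m| ≥ 2`, the bracket of `x_{i₀}^a d_γ` with
`x^{m + (1 - a) e_{i₀}} d_γ` is `γ_{i₀} (m_{i₀} + 1 - 2a) x^m d_γ` plus monomials of the same
degree with a larger exponent of `x_{i₀}`. Taking `a = 2` if `m_{i₀} = 1` and `a = 1` otherwise,
descending induction on that exponent puts every `x^m d_γ` into the derived algebra.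
-/

open scoped BigOperators

noncomputable section

/-- `subE v i = v - e_i` (with truncated subtraction in `ℕ^d`). -/
def subE {d : ℕ} (v : Fin d → ℕ) (i : Fin d) : Fin d → ℕ :=
  Function.update v i (v i - 1)

lemma subE_ne {d : ℕ} {m n : Fin d → ℕ} (hm : m ≠ 0) (hn : n ≠ 0) (i : Fin d) :
    subE (m + n) i ≠ 0 := by
  intro h
  obtain ⟨j, hj⟩ : ∃ j, m j ≠ 0 := by
    by_contra hc; push_neg at hc; exact hm (funext fun j => hc j)
  obtain ⟨j', hj'⟩ : ∃ j', n j' ≠ 0 := by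
    by_contra hc; push_neg at hc; exact hn (funext fun j => hc j)
  by_cases hji : j = i
  · by_cases hj'i : j' = i
    · rw [hji] at hj; rw [hj'i] at hj'
      have := congrFun h i
      simp only [subE, Function.update_self, Pi.add_apply, Pi.zero_apply] at this
      omega
    · have := congrFun h j'
      simp only [subE, Function.update_of_ne hj'i, Pi.add_apply, Pi.zero_apply] at this
      omega
  · have := congrFun h j
    simp only [subE, Function.update_of_ne hji, Pi.add_apply, Pi.zero_apply] at this
    omega

/-- The index `e_i ∈ ℕ^d ∖ {0}`. -/
def eIdx {d : ℕ} (i : Fin d) : {m : Fin d → ℕ // m ≠ 0} :=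
  ⟨fun j => if j = i then 1 else 0, by
    intro h
    have := congrFun h i
    simp at this⟩

/-- The defining bracket relations of the Lie algebra `𝓛^x`, spanned by the basis
`{x^m d_γ : m ∈ ℕ^d, m ≠ 0}` with `[x^m d_γ, x^n d_γ] = ∑ γ_i (n_i - m_i) x^{m+n-e_i} d_γ`. -/
def LxRel {d : ℕ} (γ : Fin d → ℂ) {Lx : Type*} [LieRing Lx] [LieAlgebra ℂ Lx]
    (b : Module.Basis {m : Fin d → ℕ // m ≠ 0} ℂ Lx) : Prop :=
  ∀ m n : {m : Fin d → ℕ // m ≠ 0},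
    ⁅b m, b n⁆ = ∑ i : Fin d,
      (γ i * ((n.1 i : ℂ) - (m.1 i : ℂ))) • b ⟨subE (m.1 + n.1) i, subE_ne m.2 n.2 i⟩

section LieSpan

variable {R L : Type*} [CommRing R] [LieRing L] [LieAlgebra R L]

theorem span_lie_eq_span_image2_lie {s : Set L} (hs : Submodule.span R s = ⊤) :
    Submodule.span R {v : L | ∃ x y : L, v = ⁅x, y⁆}
      = Submodule.span R (Set.image2 (fun x y => ⁅x, y⁆) s s) := by
  have h := Submodule.map₂_span_span R (LieModule.toEnd R L L : L →ₗ[R] Module.End R L) s s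
  rw [hs, ← Submodule.span_univ, Submodule.map₂_span_span] at h
  simpa [Set.image2, eq_comm] using h

end LieSpan

open Finset

lemma sum_add_single {ι : Type*} [Fintype ι] [DecidableEq ι] (v : ι → ℕ) (i : ι) :
    ∑ l, (v + Pi.single i 1 : ι → ℕ) l = ∑ l, v l + 1 := by
  simp [sum_add_distrib]

lemma one_le_sum_of_ne_zero {ι : Type*} [Fintype ι] {v : ι → ℕ} (hv : v ≠ 0) :
    1 ≤ ∑ l, v l := by
  rw [Nat.one_le_iff_ne_zero, Ne, sum_eq_zero_iff]
  exact fun h => hv (funext fun l => h l (mem_univ l))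

lemma add_le_sum_of_ne {ι : Type*} [Fintype ι] [DecidableEq ι] (v : ι → ℕ) {i j : ι}
    (h : i ≠ j) : v i + v j ≤ ∑ l, v l := by
  rw [← sum_pair h]
  exact sum_le_sum_of_subset (subset_univ _)

lemma eq_single_of_sum_eq_one {ι : Type*} [Fintype ι] [DecidableEq ι] {v : ι → ℕ}
    (hv : ∑ l, v l = 1) : ∃ i, v = Pi.single i 1 := by
  obtain ⟨i, hi⟩ : ∃ i, v i ≠ 0 := by
    by_contra! h
    simp [h] at hv
  refine ⟨i, funext fun j => ?_⟩
  rcases eq_or_ne j i with rfl | hj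
  · have := single_le_sum (fun l _ => Nat.zero_le (v l)) (mem_univ j)
    simp only [Pi.single_eq_same]
    omega
  · have := add_le_sum_of_ne v hj
    simp only [Pi.single_eq_of_ne hj]
    omega

section MultiIndex

variable {d : ℕ}

lemma eIdx_val (i : Fin d) : (eIdx i).1 = Pi.single i 1 := by
  ext j
  simp [eIdx, Pi.single_apply]

lemma subE_apply_of_ne (v : Fin d → ℕ) {i j : Fin d} (h : j ≠ i) : subE v i j = v j :=
  Function.update_of_ne h _ _

lemma subE_apply_self (v : Fin d → ℕ) (i : Fin d) : subE v i i = v i - 1 :=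
  Function.update_self _ _ _

lemma subE_add_single_self (v : Fin d → ℕ) (i : Fin d) : subE (v + Pi.single i 1) i = v := by
  ext j
  rcases eq_or_ne j i with rfl | h
  · simp [subE_apply_self]
  · simp [subE_apply_of_ne _ h, h]

lemma sum_subE_add_one {v : Fin d → ℕ} {i : Fin d} (hv : v i ≠ 0) :
    ∑ l, subE v i l + 1 = ∑ l, v l := by
  rw [subE, sum_update_of_mem (mem_univ i), ← add_sum_erase _ _ (mem_univ i),
    sdiff_singleton_eq_erase]
  omega

end MultiIndex

section DerivedAlgebra

variable {d : ℕ} {γ : Fin d → ℂ} {Lx : Type*} [LieRing Lx] [LieAlgebra ℂ Lx]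

def degZeroBracketSpan (γ : Fin d → ℂ) (b : Module.Basis {m : Fin d → ℕ // m ≠ 0} ℂ Lx) :
    Submodule ℂ Lx :=
  Submodule.span ℂ {v : Lx | ∃ i j : Fin d, i < j ∧ v = γ j • b (eIdx i) - γ i • b (eIdx j)}

def highDegreeSpan (b : Module.Basis {m : Fin d → ℕ // m ≠ 0} ℂ Lx) : Submodule ℂ Lx :=
  Submodule.span ℂ (⇑b '' {m : {m : Fin d → ℕ // m ≠ 0} | 2 ≤ ∑ l, m.1 l})

variable {b : Module.Basis {m : Fin d → ℕ // m ≠ 0} ℂ Lx}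

lemma lie_eIdx_eIdx (hb : LxRel γ b) {p q : Fin d} (hpq : p ≠ q) :
    ⁅b (eIdx p), b (eIdx q)⁆ = γ q • b (eIdx p) - γ p • b (eIdx q) := by
  have hp : subE ((eIdx p).1 + (eIdx q).1) p = (eIdx q).1 := by
    rw [add_comm, eIdx_val p, subE_add_single_self]
  have hq : subE ((eIdx p).1 + (eIdx q).1) q = (eIdx p).1 := by
    rw [eIdx_val q, subE_add_single_self]
  rw [hb, Fintype.sum_eq_add p q hpq (fun i hi => by simp [eIdx_val, hi.1, hi.2])]
  simp only [hp, hq, Subtype.coe_eta]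
  simp [eIdx_val, hpq, hpq.symm, sub_eq_neg_add]

lemma lie_mem_highDegreeSpan_of_three_le (hb : LxRel γ b) (m n : {m : Fin d → ℕ // m ≠ 0})
    (h : 3 ≤ ∑ l, m.1 l + ∑ l, n.1 l) : ⁅b m, b n⁆ ∈ highDegreeSpan b := by
  rw [hb]
  refine Submodule.sum_mem _ fun i _ => ?_
  by_cases hmn : n.1 i = m.1 i
  · simp [hmn]
  refine Submodule.smul_mem _ _ (Submodule.subset_span ⟨_, ?_, rfl⟩)
  have := sum_subE_add_one (v := m.1 + n.1) (i := i) (by simp only [Pi.add_apply]; omega)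
  simp only [Pi.add_apply, sum_add_distrib] at this
  show 2 ≤ ∑ l, subE (m.1 + n.1) i l
  omega

lemma lie_mem_degZeroBracketSpan_sup_highDegreeSpan (hb : LxRel γ b)
    (m n : {m : Fin d → ℕ // m ≠ 0}) :
    ⁅b m, b n⁆ ∈ degZeroBracketSpan γ b ⊔ highDegreeSpan b := by
  by_cases h3 : 3 ≤ ∑ l, m.1 l + ∑ l, n.1 l
  · exact Submodule.mem_sup_right (lie_mem_highDegreeSpan_of_three_le hb m n h3)
  have hm := one_le_sum_of_ne_zero m.2
  have hn := one_le_sum_of_ne_zero n.2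
  obtain ⟨p, hp⟩ := eq_single_of_sum_eq_one (v := m.1) (by omega)
  obtain ⟨q, hq⟩ := eq_single_of_sum_eq_one (v := n.1) (by omega)
  obtain rfl : m = eIdx p := Subtype.ext (hp.trans (eIdx_val p).symm)
  obtain rfl : n = eIdx q := Subtype.ext (hq.trans (eIdx_val q).symm)
  rcases lt_trichotomy p q with hpq | rfl | hqp
  · rw [lie_eIdx_eIdx hb hpq.ne]
    exact Submodule.mem_sup_left (Submodule.subset_span ⟨p, q, hpq, rfl⟩)
  · simp
  · rw [lie_eIdx_eIdx hb hqp.ne', ← neg_sub]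
    exact neg_mem (Submodule.mem_sup_left (Submodule.subset_span ⟨q, p, hqp, rfl⟩))

lemma basis_mem_span_lie_of_add_eq (hb : LxRel γ b) {i₀ : Fin d} (hγ : γ i₀ ≠ 0)
    {m p q : {m : Fin d → ℕ // m ≠ 0}} (hp : ∀ i ≠ i₀, p.1 i = 0)
    (hpq : p.1 + q.1 = m.1 + Pi.single i₀ 1) (hne : q.1 i₀ ≠ p.1 i₀)
    (hnext : ∀ i ≠ i₀, m.1 i ≠ 0 → ∀ n : {m : Fin d → ℕ // m ≠ 0},
      n.1 = subE (m.1 + Pi.single i₀ 1) i →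
        b n ∈ Submodule.span ℂ {v : Lx | ∃ x y : Lx, v = ⁅x, y⁆}) :
    b m ∈ Submodule.span ℂ {v : Lx | ∃ x y : Lx, v = ⁅x, y⁆} := by
  set D := Submodule.span ℂ {v : Lx | ∃ x y : Lx, v = ⁅x, y⁆}
  have hq : ∀ i ≠ i₀, q.1 i = m.1 i := fun i hi => by
    simpa [hp i hi, hi] using congrFun hpq i
  have hc : γ i₀ * ((q.1 i₀ : ℂ) - p.1 i₀) ≠ 0 :=
    mul_ne_zero hγ (sub_ne_zero.2 (Nat.cast_injective.ne hne))
  have hsplit : (γ i₀ * ((q.1 i₀ : ℂ) - p.1 i₀)) • b m = ⁅b p, b q⁆ - ∑ i ∈ univ.erase i₀,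
      (γ i * ((q.1 i : ℂ) - p.1 i)) • b ⟨subE (p.1 + q.1) i, subE_ne p.2 q.2 i⟩ := by
    rw [hb, ← add_sum_erase _ _ (mem_univ i₀), add_sub_cancel_right]
    simp only [hpq, subE_add_single_self, Subtype.coe_eta]
  refine (Submodule.smul_mem_iff D hc).1 (hsplit ▸ D.sub_mem (Submodule.subset_span ⟨_, _, rfl⟩)
    (D.sum_mem fun i hi => ?_))
  have hi : i ≠ i₀ := ne_of_mem_erase hi
  rw [hp i hi, hq i hi]
  by_cases hmi : m.1 i = 0
  · simp [hmi]
  · exact D.smul_mem _ (hnext i hi hmi _ (by simp only [hpq]))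

theorem basis_mem_span_lie_of_two_le_sum (hb : LxRel γ b) {i₀ : Fin d} (hγ : γ i₀ ≠ 0)
    (m : {m : Fin d → ℕ // m ≠ 0}) (hm : 2 ≤ ∑ l, m.1 l) :
    b m ∈ Submodule.span ℂ {v : Lx | ∃ x y : Lx, v = ⁅x, y⁆} := by
  induction hr : ∑ l, m.1 l - m.1 i₀ using Nat.strong_induction_on generalizing m with
  | _ r IH =>
  have hnext : ∀ i ≠ i₀, m.1 i ≠ 0 → ∀ n : {m : Fin d → ℕ // m ≠ 0},
      n.1 = subE (m.1 + Pi.single i₀ 1) i →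
        b n ∈ Submodule.span ℂ {v : Lx | ∃ x y : Lx, v = ⁅x, y⁆} := by
    rintro i hi hmi n hn
    have hsum := sum_subE_add_one (v := m.1 + Pi.single i₀ 1) (i := i) (by simp [hi, hmi])
    rw [sum_add_single, ← hn] at hsum
    have hni₀ : n.1 i₀ = m.1 i₀ + 1 := by simp [hn, subE_apply_of_ne _ hi.symm]
    have := add_le_sum_of_ne m.1 hi
    exact IH _ (by omega) n (by omega) rfl
  by_cases h1 : m.1 i₀ = 1
  · have hsum := sum_subE_add_one (v := m.1) (i := i₀) (by omega)
    have hq : subE m.1 i₀ ≠ 0 := fun h => by simp [h] at hsum; omega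
    refine basis_mem_span_lie_of_add_eq (p := ⟨Pi.single i₀ 2, by simp⟩) (q := ⟨_, hq⟩) hb hγ
      (fun i hi => by simp [hi]) ?_ (by simp [subE_apply_self, h1]) hnext
    ext j
    rcases eq_or_ne j i₀ with rfl | hj
    · simp [subE_apply_self, h1]
    · simp [subE_apply_of_ne _ hj, hj]
  · exact basis_mem_span_lie_of_add_eq (p := eIdx i₀) (q := m) hb hγ
      (fun i hi => by simp [eIdx_val, hi]) (by rw [eIdx_val, add_comm]) (by simpa [eIdx_val]) hnext

lemma degZeroBracketSpan_le_span_image_compl :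
    degZeroBracketSpan γ b ≤ Submodule.span ℂ (⇑b '' {m | 2 ≤ ∑ l, m.1 l}ᶜ) := by
  have he : ∀ i, b (eIdx i) ∈ Submodule.span ℂ (⇑b '' {m | 2 ≤ ∑ l, m.1 l}ᶜ) := fun i =>
    Submodule.subset_span ⟨eIdx i, by simp [eIdx_val], rfl⟩
  rw [degZeroBracketSpan, Submodule.span_le]
  rintro _ ⟨i, j, -, rfl⟩
  exact sub_mem (Submodule.smul_mem _ _ (he i)) (Submodule.smul_mem _ _ (he j))

lemma disjoint_degZeroBracketSpan_highDegreeSpan :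
    Disjoint (degZeroBracketSpan γ b) (highDegreeSpan b) :=
  (b.linearIndependent.disjoint_span_image disjoint_compl_left).mono_left
    degZeroBracketSpan_le_span_image_compl

end DerivedAlgebra

theorem stmt3_general (d : ℕ) (γ : Fin d → ℂ) (hγ : LinearIndependent ℚ γ)
    (Lx : Type*) [LieRing Lx] [LieAlgebra ℂ Lx]
    (b : Module.Basis {m : Fin d → ℕ // m ≠ 0} ℂ Lx) (hb : LxRel γ b) :
    Submodule.span ℂ {v : Lx | ∃ x y : Lx, v = ⁅x, y⁆}
      = Submodule.span ℂ
          {v : Lx | ∃ i j : Fin d, i < j ∧ v = γ j • b (eIdx i) - γ i • b (eIdx j)}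
        ⊔ Submodule.span ℂ (⇑b '' {m : {m : Fin d → ℕ // m ≠ 0} | 2 ≤ ∑ l, m.1 l}) ∧
    Submodule.span ℂ
        {v : Lx | ∃ i j : Fin d, i < j ∧ v = γ j • b (eIdx i) - γ i • b (eIdx j)}
      ⊓ Submodule.span ℂ (⇑b '' {m : {m : Fin d → ℕ // m ≠ 0} | 2 ≤ ∑ l, m.1 l}) = ⊥ := by
  change _ = degZeroBracketSpan γ b ⊔ highDegreeSpan b ∧
    degZeroBracketSpan γ b ⊓ highDegreeSpan b = ⊥
  refine ⟨le_antisymm ?_ (sup_le ?_ ?_), disjoint_iff.1 disjoint_degZeroBracketSpan_highDegreeSpan⟩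
  · rw [span_lie_eq_span_image2_lie b.span_eq, Submodule.span_le, Set.image2_subset_iff]
    rintro _ ⟨m, rfl⟩ _ ⟨n, rfl⟩
    exact lie_mem_degZeroBracketSpan_sup_highDegreeSpan hb m n
  · rw [degZeroBracketSpan, Submodule.span_le]
    rintro _ ⟨i, j, hij, rfl⟩
    exact Submodule.subset_span ⟨_, _, (lie_eIdx_eIdx hb hij.ne).symm⟩
  · rw [highDegreeSpan, Submodule.span_le]
    rintro _ ⟨m, hm, rfl⟩
    obtain ⟨i₀, -⟩ := Function.ne_iff.1 m.2
    exact basis_mem_span_lie_of_two_le_sum hb (hγ.ne_zero i₀) m hm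

/-- Theorem 4.1(1), after Billig–Futorny.  The derived subalgebra of
`𝓛^x` decomposes as `[𝓛^x, 𝓛^x] = [𝓛^x_0, 𝓛^x_0] ⊕ (⊕_{j ≥ 1} 𝓛^x_j)`; explicitly,
`[𝓛^x, 𝓛^x]` is the (internal) direct sum of
`span{γ_j x_i d_γ - γ_i x_j d_γ : 1 ≤ i < j ≤ d}` and `span{x^m d_γ : |m| ≥ 2}`. -/
theorem stmt3 (d : ℕ) (hd : 0 < d) (γ : Fin d → ℂ) (hγ : LinearIndependent ℚ γ)
    (Lx : Type*) [LieRing Lx] [LieAlgebra ℂ Lx]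
    (b : Module.Basis {m : Fin d → ℕ // m ≠ 0} ℂ Lx) (hb : LxRel γ b) :
    Submodule.span ℂ {v : Lx | ∃ x y : Lx, v = ⁅x, y⁆}
      = Submodule.span ℂ
          {v : Lx | ∃ i j : Fin d, i < j ∧ v = γ j • b (eIdx i) - γ i • b (eIdx j)}
        ⊔ Submodule.span ℂ (⇑b '' {m : {m : Fin d → ℕ // m ≠ 0} | 2 ≤ ∑ l, m.1 l}) ∧
    Submodule.span ℂ
        {v : Lx | ∃ i j : Fin d, i < j ∧ v = γ j • b (eIdx i) - γ i • b (eIdx j)}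
      ⊓ Submodule.span ℂ (⇑b '' {m : {m : Fin d → ℕ // m ≠ 0} | 2 ≤ ∑ l, m.1 l}) = ⊥ :=
  stmt3_general d γ hγ Lx b hb
end
end

section
/- Let M be a cuspidal Zg-module. For all m,n ∈ R and r,s ∉ R the following identities of operators on M hold: (i) [D(m), D(n)] = (γ|n)(D(m+n) − D(n)) − (γ|m)(D(m+n) − D(m)); (ii) [D(m), D(n,s)] = (γ|n+s) D(m+n, s) − (γ|n) D(n,s); (iii) if r+s ∉ R then [D(m,r), D(n,s)] = (σ(r,s) − σ(s,r)) D(m+n, r+s), while if r+s ∈ R then σ(r,s) = σ(s,r) and [D(m,r), D(n,s)] = 0. -/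
open scoped BigOperators

noncomputable section

/-! Moving `t^{-n}` past `L_u` costs exactly the semidirect bracket `[L_u, t^{-n}]`, which is
`(γ|-n) t^{u-n}` for `u ∈ R` and `0` otherwise; hence every product of two operators `D` equals
`t^{-(m+n)} L_u L_v` plus that correction, and their commutators reduce to brackets in `g`.
Since `q_i^{k_i} = 1`, shifting the arguments of `σ` by elements of `R` does not change it. -/

theorem zpow_eq_zpow_of_dvd_sub {G₀ : Type*} [GroupWithZero G₀] {ζ : G₀} {k : ℕ}
    (hζ : ζ ^ k = 1) {a b : ℤ} (h : (k : ℤ) ∣ a - b) : ζ ^ a = ζ ^ b := by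
  rcases Nat.eq_zero_or_pos k with rfl | hk
  · obtain rfl : a = b := by simpa [sub_eq_zero] using h
    rfl
  have hζ0 : ζ ≠ 0 := by
    rintro rfl
    exact zero_ne_one ((zero_pow hk.ne').symm.trans hζ)
  obtain ⟨t, ht⟩ := h
  rw [← sub_add_cancel a b, zpow_add₀ hζ0, ht, zpow_mul, zpow_natCast, hζ, one_zpow, one_mul]

lemma ginner_neg {d : ℕ} (γ : Fin d → ℂ) (m : Fin d → ℤ) : ginner γ (-m) = -ginner γ m := by
  simp [ginner, ← Finset.sum_neg_distrib]

lemma ginner_sub {d : ℕ} (γ : Fin d → ℂ) (m n : Fin d → ℤ) :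
    ginner γ (m - n) = ginner γ m - ginner γ n := by
  simp [ginner, mul_sub, Finset.sum_sub_distrib]

section qsigma

variable {d z : ℕ} (h : 2*z ≤ d) {k : Fin z → ℕ} {q : Fin z → ℂ}

lemma qsigma_add_add_of_mem (hq : ∀ i, q i ^ k i = 1) {m n : Fin d → ℤ} (hm : m ∈ Rgrp h k)
    (hn : n ∈ Rgrp h k) (r s : Fin d → ℤ) : qsigma h q (m + r) (n + s) = qsigma h q r s := by
  refine Finset.prod_congr rfl fun i _ => zpow_eq_zpow_of_dvd_sub (hq i) ?_
  have e : (n (p2 h i) + s (p2 h i)) * (m (p1 h i) + r (p1 h i)) - s (p2 h i) * r (p1 h i)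
      = n (p2 h i) * (m (p1 h i) + r (p1 h i)) + s (p2 h i) * m (p1 h i) := by ring
  simpa only [Pi.add_apply, e] using dvd_add ((hn i).2.mul_right _) ((hm i).1.mul_left _)

lemma qsigma_comm_of_add_mem (hq : ∀ i, q i ^ k i = 1) {r s : Fin d → ℤ}
    (hrs : r + s ∈ Rgrp h k) :
    qsigma h q r s = qsigma h q s r := by
  refine Finset.prod_congr rfl fun i _ => zpow_eq_zpow_of_dvd_sub (hq i) ?_
  have e : s (p2 h i) * r (p1 h i) - r (p2 h i) * s (p1 h i)
      = (r + s) (p2 h i) * r (p1 h i) - r (p2 h i) * (r + s) (p1 h i) := by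
    simp only [Pi.add_apply]; ring
  rw [e]
  exact dvd_sub ((hrs i).2.mul_right _) ((hrs i).1.mul_left _)

end qsigma

namespace ZRel

variable {d z : ℕ} {h : 2*z ≤ d} {k : Fin z → ℕ} {γ : Fin d → ℂ}
  {M : Type*} [AddCommGroup M] [Module ℂ M] {L T : (Fin d → ℤ) → Module.End ℂ M}

lemma T_neg_mul_T_neg (hZ : ZRel h k γ L T) {a b : Fin d → ℤ} (ha : a ∈ Rgrp h k)
    (hb : b ∈ Rgrp h k) : T (-a) * T (-b) = T (-(a + b)) := by
  rw [hZ.1 _ _ (neg_mem ha) (neg_mem hb), neg_add]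

lemma D_mul_D (hZ : ZRel h k γ L T) {a b : Fin d → ℤ} (ha : a ∈ Rgrp h k)
    (hb : b ∈ Rgrp h k) (u v : Fin d → ℤ) :
    (T (-a) * L u) * (T (-b) * L v)
      = T (-(a + b)) * (L u * L v) + T (-a) * ⁅L u, T (-b)⁆ * L v := by
  rw [Ring.lie_def, ← hZ.T_neg_mul_T_neg ha hb]
  noncomm_ring

lemma D_mul_D_of_mem (hZ : ZRel h k γ L T) {a b : Fin d → ℤ} (ha : a ∈ Rgrp h k)
    (hb : b ∈ Rgrp h k) (v : Fin d → ℤ) :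
    (T (-a) * L a) * (T (-b) * L v)
      = T (-(a + b)) * (L a * L v) - ginner γ b • (T (-b) * L v) := by
  have hTT : T (-a) * T (a + -b) = T (-b) := by
    rw [hZ.1 _ _ (neg_mem ha) (add_mem ha (neg_mem hb)), neg_add_cancel_left]
  rw [hZ.D_mul_D ha hb, hZ.2.2.1 _ _ ha (neg_mem hb), ginner_neg, mul_smul_comm, hTT,
    smul_mul_assoc, neg_smul, ← sub_eq_add_neg]

lemma D_mul_D_of_not_mem (hZ : ZRel h k γ L T) {a b u : Fin d → ℤ} (ha : a ∈ Rgrp h k)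
    (hb : b ∈ Rgrp h k) (hu : u ∉ Rgrp h k) (v : Fin d → ℤ) :
    (T (-a) * L u) * (T (-b) * L v) = T (-(a + b)) * (L u * L v) := by
  rw [hZ.D_mul_D ha hb, hZ.2.2.2 _ _ hu (neg_mem hb), mul_zero, zero_mul, add_zero]

variable {q : Fin z → ℂ}

lemma lie_D_D (hZ : ZRel h k γ L T) (hg : GRel h k q γ L) {m n : Fin d → ℤ}
    (hm : m ∈ Rgrp h k) (hn : n ∈ Rgrp h k) :
    ⁅T (-m) * L m, T (-n) * L n⁆
      = ginner γ n • (T (-(m + n)) * L (m + n) - T (-n) * L n)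
        - ginner γ m • (T (-(m + n)) * L (m + n) - T (-m) * L m) := by
  rw [Ring.lie_def, hZ.D_mul_D_of_mem hm hn, hZ.D_mul_D_of_mem hn hm, add_comm n m,
    sub_sub_sub_comm, ← mul_sub, ← Ring.lie_def, hg.1 m n hm hn, ginner_sub, mul_smul_comm]
  module

lemma lie_D_D_of_not_mem (hZ : ZRel h k γ L T) (hg : GRel h k q γ L) {m n s : Fin d → ℤ}
    (hm : m ∈ Rgrp h k) (hn : n ∈ Rgrp h k) (hs : s ∉ Rgrp h k) :
    ⁅T (-m) * L m, T (-n) * L (n + s)⁆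
      = ginner γ (n + s) • (T (-(m + n)) * L (m + n + s))
        - ginner γ n • (T (-n) * L (n + s)) := by
  have hns : n + s ∉ Rgrp h k := (AddSubgroup.add_mem_cancel_left _ hn).not.mpr hs
  rw [Ring.lie_def, hZ.D_mul_D_of_mem hm hn, hZ.D_mul_D_of_not_mem hn hm hns,
    add_comm n m, sub_right_comm, ← mul_sub, ← Ring.lie_def, hg.2.1 m (n + s) hm hns, mul_smul_comm, add_assoc]

lemma lie_D_D_of_not_mem_of_not_mem (hZ : ZRel h k γ L T) (hg : GRel h k q γ L)
    (hq : ∀ i, q i ^ k i = 1) {m n r s : Fin d → ℤ} (hm : m ∈ Rgrp h k)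
    (hn : n ∈ Rgrp h k) (hr : r ∉ Rgrp h k) (hs : s ∉ Rgrp h k) :
    ⁅T (-m) * L (m + r), T (-n) * L (n + s)⁆
      = (qsigma h q r s - qsigma h q s r) • (T (-(m + n)) * L (m + n + r + s)) := by
  have hmr : m + r ∉ Rgrp h k := (AddSubgroup.add_mem_cancel_left _ hm).not.mpr hr
  have hns : n + s ∉ Rgrp h k := (AddSubgroup.add_mem_cancel_left _ hn).not.mpr hs
  rw [Ring.lie_def, hZ.D_mul_D_of_not_mem hm hn hmr, hZ.D_mul_D_of_not_mem hn hm hns,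
    add_comm n m, ← mul_sub, ← Ring.lie_def, hg.2.2 _ _ hmr hns,
    qsigma_add_add_of_mem h hq hm hn, qsigma_add_add_of_mem h hq hn hm, mul_smul_comm,
    add_add_add_comm m r n s, add_assoc (m + n)]

end ZRel

/-- Lemma 5.1.  Let `M` be a cuspidal `Zg`-module and set
`D(m) = t^{-m} ∘ L_m` and `D(m,r) = t^{-m} ∘ L_{m+r}` for `m ∈ R`, `r ∉ R`.  Then the
stated commutator identities hold among these operators. -/
theorem stmt10 (d z : ℕ) (h2z : 2*z ≤ d)
    (k : Fin z → ℕ)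
    (q : Fin z → ℂ) (hq : ∀ i, IsPrimitiveRoot (q i) (k i))
    (γ : Fin d → ℂ)
    (M : Type*) [AddCommGroup M] [Module ℂ M]
    (L T : (Fin d → ℤ) → Module.End ℂ M)
    (hg : GRel h2z k q γ L) (hZ : ZRel h2z k γ L T) :
    -- (i)
    (∀ m n, m ∈ Rgrp h2z k → n ∈ Rgrp h2z k →
      ⁅T (-m) * L m, T (-n) * L n⁆
        = (ginner γ n) • (T (-(m+n)) * L (m+n) - T (-n) * L n)
          - (ginner γ m) • (T (-(m+n)) * L (m+n) - T (-m) * L m)) ∧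
    -- (ii)
    (∀ m n s, m ∈ Rgrp h2z k → n ∈ Rgrp h2z k → s ∉ Rgrp h2z k →
      ⁅T (-m) * L m, T (-n) * L (n + s)⁆
        = (ginner γ (n + s)) • (T (-(m+n)) * L (m+n+s)) - (ginner γ n) • (T (-n) * L (n+s))) ∧
    -- (iii)
    (∀ m n r s, m ∈ Rgrp h2z k → n ∈ Rgrp h2z k → r ∉ Rgrp h2z k → s ∉ Rgrp h2z k →
      (r + s ∉ Rgrp h2z k →
        ⁅T (-m) * L (m + r), T (-n) * L (n + s)⁆
          = (qsigma h2z q r s - qsigma h2z q s r) • (T (-(m+n)) * L (m+n+r+s))) ∧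
      (r + s ∈ Rgrp h2z k →
        qsigma h2z q r s = qsigma h2z q s r ∧
        ⁅T (-m) * L (m + r), T (-n) * L (n + s)⁆ = 0)) := by
  have hq1 : ∀ i, q i ^ k i = 1 := fun i => (hq i).pow_eq_one
  refine ⟨fun m n hm hn => hZ.lie_D_D hg hm hn,
    fun m n s hm hn hs => hZ.lie_D_D_of_not_mem hg hm hn hs,
    fun m n r s hm hn hr hs => ⟨fun _ => hZ.lie_D_D_of_not_mem_of_not_mem hg hq1 hm hn hr hs,
      fun hrs => ?_⟩⟩
  have hσ := qsigma_comm_of_add_mem h2z hq1 hrs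
  refine ⟨hσ, ?_⟩
  rw [hZ.lie_D_D_of_not_mem_of_not_mem hg hq1 hm hn hr hs, hσ, sub_self, zero_smul]
end
end

section
/- Let B = diag(k_1, k_1, k_2, k_2, …, k_z, k_z, 1, …, 1) be the d×d diagonal matrix and μ = Bγ ∈ ℂ^d (which is generic). Then g_R = span{L_m : m ∈ R} is a Lie subalgebra of g, R = Bℤ^d, and the linear map g_R → W_μ determined by L_{Bn} ↦ x^n ∂_μ for n ∈ ℤ^d is an isomorphism of Lie algebras. -/
/-! The map `B` is injective with image `R`, so `L_{Bn}` is a basis of `g_R`, and the brackets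
of `g` on `R` read `[L_{Bm}, L_{Bn}] = (γ|Bn - Bm) L_{B(m+n)} = (Bγ|n - m) L_{B(m+n)}`: these are
the structure constants of `W_μ` in the basis `x^n ∂_μ`. Genericity of `μ = Bγ` holds because
`B` rescales each `γ_l` by a nonzero integer. -/

open scoped BigOperators

noncomputable section

/-- The diagonal matrix `B = diag(k₁,k₁,…,k_z,k_z,1,…,1)` acting on `ℤ^d`. -/
def Bfun {d z : ℕ} (h : 2*z ≤ d) (k : Fin z → ℕ) (n : Fin d → ℤ) : Fin d → ℤ :=
  fun l => if hl : (l:ℕ) < 2*z then (k ⟨(l:ℕ)/2, by omega⟩ : ℤ) * n l else n l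

/-- The vector `μ = Bγ ∈ ℂ^d`. -/
def Bmu {d z : ℕ} (h : 2*z ≤ d) (k : Fin z → ℕ) (γ : Fin d → ℂ) : Fin d → ℂ :=
  fun l => if hl : (l:ℕ) < 2*z then (k ⟨(l:ℕ)/2, by omega⟩ : ℂ) * γ l else γ l

lemma Bfun_mem {d z : ℕ} (h : 2*z ≤ d) (k : Fin z → ℕ) (n : Fin d → ℤ) :
    Bfun h k n ∈ Rgrp h k := by
  intro i
  have h1 : ((p1 h i : ℕ)) < 2*z := by simp only [p1]; have := i.2; omega
  have h2 : ((p2 h i : ℕ)) < 2*z := by simp only [p2]; have := i.2; omega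
  have e1 : (⟨((p1 h i : ℕ))/2, by omega⟩ : Fin z) = i := by
    apply Fin.ext; simp only [p1]; omega
  have e2 : (⟨((p2 h i : ℕ))/2, by omega⟩ : Fin z) = i := by
    apply Fin.ext; simp only [p2]; omega
  constructor <;> simp only [Bfun, dif_pos h1, dif_pos h2, e1, e2] <;>
    exact Dvd.intro _ rfl

section LieSpan

variable {ι R L L' : Type*} [CommRing R] [LieRing L] [LieAlgebra R L] [LieRing L']
  [LieAlgebra R L']

theorem Submodule.lie_mem_span_of_forall_lie_mem_span {s : Set L}
    (hs : ∀ x ∈ s, ∀ y ∈ s, ⁅x, y⁆ ∈ span R s) {x y : L} (hx : x ∈ span R s)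
    (hy : y ∈ span R s) : ⁅x, y⁆ ∈ span R s := by
  induction hx, hy using Submodule.span_induction₂ with
  | mem_mem x y hx hy => exact hs x hx y hy
  | zero_left y _ => simp
  | zero_right x _ => simp
  | add_left x y z _ _ _ hx hy => simpa only [add_lie] using add_mem hx hy
  | add_right x y z _ _ _ hx hy => simpa only [lie_add] using add_mem hx hy
  | smul_left r x y _ _ h => simpa only [smul_lie] using smul_mem _ r h
  | smul_right r x y _ _ h => simpa only [lie_smul] using smul_mem _ r h

theorem Submodule.map_lie_of_basis {S : Submodule R L} (hS : ∀ x ∈ S, ∀ y ∈ S, ⁅x, y⁆ ∈ S)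
    (b : Module.Basis ι R S) (f : S →ₗ[R] L')
    (hb : ∀ i j, f ⟨⁅(b i : L), b j⁆, hS _ (b i).2 _ (b j).2⟩ = ⁅f (b i), f (b j)⁆)
    (x y : S) : f ⟨⁅(x : L), y⁆, hS _ x.2 _ y.2⟩ = ⁅f x, f y⁆ := by
  let B : S →ₗ[R] S →ₗ[R] L' := LinearMap.mk₂ R (fun x y => f ⟨⁅(x : L), y⁆, hS _ x.2 _ y.2⟩)
    (fun x x' y => by rw [← map_add]; exact congrArg f (Subtype.ext (add_lie _ _ _)))
    (fun c x y => by rw [← map_smul]; exact congrArg f (Subtype.ext (smul_lie _ _ _)))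
    (fun x y y' => by rw [← map_add]; exact congrArg f (Subtype.ext (lie_add _ _ _)))
    (fun c x y => by rw [← map_smul]; exact congrArg f (Subtype.ext (lie_smul _ _ _)))
  let B' : S →ₗ[R] S →ₗ[R] L' :=
    (LieModule.toEnd R L' L' : L' →ₗ[R] Module.End R L').compl₁₂ f f
  exact LinearMap.congr_fun₂ (LinearMap.ext_basis b b hb : B = B') x y

end LieSpan

section DiagonalLattice

variable {d z : ℕ} (h : 2*z ≤ d) (k : Fin z → ℕ)

theorem Bfun_add (m n : Fin d → ℤ) : Bfun h k (m + n) = Bfun h k m + Bfun h k n := by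
  funext l
  simp only [Bfun, Pi.add_apply]
  split <;> ring

theorem Bfun_sub (m n : Fin d → ℤ) : Bfun h k (m - n) = Bfun h k m - Bfun h k n := by
  funext l
  simp only [Bfun, Pi.sub_apply]
  split <;> ring

theorem ginner_Bfun (γ : Fin d → ℂ) (n : Fin d → ℤ) :
    ginner γ (Bfun h k n) = ginner (Bmu h k γ) n := by
  refine Finset.sum_congr rfl fun l _ => ?_
  by_cases hl : (l : ℕ) < 2*z
  · simp only [Bfun, Bmu, dif_pos hl]
    push_cast
    ring
  · simp only [Bfun, Bmu, dif_neg hl]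

variable {k}

theorem Bfun_injective (hk : ∀ i, 0 < k i) : Function.Injective (Bfun h k) := by
  intro m n hmn
  funext l
  have hl := congrFun hmn l
  simp only [Bfun] at hl
  split at hl
  · exact mul_left_cancel₀ (by exact_mod_cast (hk _).ne') hl
  · exact hl

theorem linearIndependent_Bmu (hk : ∀ i, 0 < k i) {γ : Fin d → ℂ}
    (hγ : LinearIndependent ℚ γ) : LinearIndependent ℚ (Bmu h k γ) := by
  let w : Fin d → ℚˣ := fun l =>
    if hl : (l : ℕ) < 2*z then Units.mk0 (k ⟨(l : ℕ)/2, by omega⟩ : ℚ)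
      (by exact_mod_cast (hk _).ne') else 1
  have hw : Bmu h k γ = w • γ := by
    funext l
    by_cases hl : (l : ℕ) < 2*z <;> simp [Bmu, w, hl, Rat.smul_def]
  rw [hw]
  exact hγ.units_smul w

theorem natCast_dvd_of_mem_Rgrp {m : Fin d → ℤ} (hm : m ∈ Rgrp h k) (l : Fin d)
    (hl : (l : ℕ) < 2*z) : ((k ⟨(l : ℕ)/2, by omega⟩ : ℕ) : ℤ) ∣ m l := by
  rcases Nat.even_or_odd (l : ℕ) with he | ho
  · have hl1 : l = p1 h ⟨(l : ℕ)/2, by omega⟩ := by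
      rw [Nat.even_iff] at he
      ext; simp only [p1]; omega
    have := (hm ⟨(l : ℕ)/2, by omega⟩).1
    rwa [← hl1] at this
  · have hl2 : l = p2 h ⟨(l : ℕ)/2, by omega⟩ := by
      rw [Nat.odd_iff] at ho
      ext; simp only [p2]; omega
    have := (hm ⟨(l : ℕ)/2, by omega⟩).2
    rwa [← hl2] at this

theorem mem_Rgrp_iff_exists_eq_Bfun (m : Fin d → ℤ) :
    m ∈ Rgrp h k ↔ ∃ n : Fin d → ℤ, m = Bfun h k n := by
  refine ⟨fun hm => ?_, fun ⟨n, hn⟩ => hn ▸ Bfun_mem h k n⟩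
  refine ⟨fun l => if hl : (l : ℕ) < 2*z then m l / (k ⟨(l : ℕ)/2, by omega⟩ : ℤ) else m l, ?_⟩
  funext l
  simp only [Bfun]
  split
  · next hl => exact (Int.mul_ediv_cancel' (natCast_dvd_of_mem_Rgrp h hm l hl)).symm
  · rfl

theorem coe_Rgrp_eq_range_Bfun :
    (Rgrp h k : Set (Fin d → ℤ)) = Set.range (Bfun h k) := by
  ext m
  simpa [eq_comm] using mem_Rgrp_iff_exists_eq_Bfun h m

end DiagonalLattice

/-- With `B = diag(k₁,k₁,…,k_z,k_z,1,…,1)` and `μ = Bγ` (which is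
generic), the span `g_R = span{L_m : m ∈ R}` is a Lie subalgebra of `g`, `R = Bℤ^d`,
and `L_{Bn} ↦ x^n ∂_μ` determines an isomorphism of Lie algebras `g_R ≅ W_μ`.  Here `g`
is presented by a basis `bL` satisfying its structure relations, and `W_μ` by a basis
`bW` with `[x^m ∂_μ, x^n ∂_μ] = (μ | n - m) x^{m+n} ∂_μ`. -/
theorem stmt19 (d z : ℕ) (h2z : 2*z ≤ d)
    (k : Fin z → ℕ) (hk : ∀ i, 0 < k i)
    (γ : Fin d → ℂ) (hγ : LinearIndependent ℚ γ)
    -- `g` is the solenoidal Lie algebra over the rational quantum torus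
    (g : Type*) [LieRing g] [LieAlgebra ℂ g]
    (bL : Module.Basis (Fin d → ℤ) ℂ g)
    (hg1 : ∀ m n, m ∈ Rgrp h2z k → n ∈ Rgrp h2z k →
      ⁅bL m, bL n⁆ = (ginner γ (n - m)) • bL (m + n))
    -- `W'` is the solenoidal Lie algebra `W_μ` with `μ = Bγ`
    (W' : Type*) [LieRing W'] [LieAlgebra ℂ W']
    (bW : Module.Basis (Fin d → ℤ) ℂ W')
    (hW : ∀ m n : Fin d → ℤ,
      ⁅bW m, bW n⁆ = (ginner (Bmu h2z k γ) (n - m)) • bW (m + n)) :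
    -- `μ = Bγ` is generic
    LinearIndependent ℚ (Bmu h2z k γ) ∧
    -- `R = Bℤ^d`
    (∀ m : Fin d → ℤ, m ∈ Rgrp h2z k ↔ ∃ n : Fin d → ℤ, m = Bfun h2z k n) ∧
    -- `g_R` is a Lie subalgebra and `L_{Bn} ↦ x^n ∂_μ` is a Lie algebra isomorphism
    ∃ hclosed : ∀ x ∈ Submodule.span ℂ (⇑bL '' ↑(Rgrp h2z k)),
        ∀ y ∈ Submodule.span ℂ (⇑bL '' ↑(Rgrp h2z k)),
        ⁅x, y⁆ ∈ Submodule.span ℂ (⇑bL '' ↑(Rgrp h2z k)),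
      ∃ φ : ↥(Submodule.span ℂ (⇑bL '' ↑(Rgrp h2z k))) ≃ₗ[ℂ] W',
        (∀ n : Fin d → ℤ,
          φ ⟨bL (Bfun h2z k n),
              Submodule.subset_span (Set.mem_image_of_mem _ (Bfun_mem h2z k n))⟩
            = bW n) ∧
        (∀ x y : ↥(Submodule.span ℂ (⇑bL '' ↑(Rgrp h2z k))),
          φ ⟨⁅x.1, y.1⁆, hclosed x.1 x.2 y.1 y.2⟩ = ⁅φ x, φ y⁆) := by
  set S := Submodule.span ℂ (⇑bL '' ↑(Rgrp h2z k))
  have hclosed : ∀ x ∈ S, ∀ y ∈ S, ⁅x, y⁆ ∈ S := fun x hx y hy =>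
    Submodule.lie_mem_span_of_forall_lie_mem_span (by
      rintro _ ⟨m, hm, rfl⟩ _ ⟨n, hn, rfl⟩
      rw [hg1 m n hm hn]
      exact Submodule.smul_mem _ _ (Submodule.subset_span ⟨m + n, add_mem hm hn, rfl⟩)) hx hy
  have hS : Submodule.span ℂ (Set.range (bL ∘ Bfun h2z k)) = S := by
    rw [Set.range_comp, ← coe_Rgrp_eq_range_Bfun h2z]
  let b : Module.Basis (Fin d → ℤ) ℂ S :=
    (Module.Basis.span (bL.linearIndependent.comp _ (Bfun_injective h2z hk))).map
      (LinearEquiv.ofEq _ _ hS)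
  have hb : ∀ n, b n = ⟨bL (Bfun h2z k n),
      Submodule.subset_span (Set.mem_image_of_mem _ (Bfun_mem h2z k n))⟩ := fun n =>
    Subtype.ext (by simp [b, Module.Basis.span_apply])
  let φ : S ≃ₗ[ℂ] W' := b.equiv bW (Equiv.refl _)
  have hφ : ∀ n, φ (b n) = bW n := fun n => by simp [φ]
  refine ⟨linearIndependent_Bmu h2z hk hγ, mem_Rgrp_iff_exists_eq_Bfun h2z, hclosed, φ,
    fun n => hb n ▸ hφ n, Submodule.map_lie_of_basis hclosed b φ.toLinearMap fun m n => ?_⟩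
  have hbracket : (⟨⁅(b m : g), b n⁆, hclosed _ (b m).2 _ (b n).2⟩ : S) =
      ginner (Bmu h2z k γ) (n - m) • b (m + n) := by
    ext
    simp only [hb, Submodule.coe_smul, Bfun_add, ← ginner_Bfun, Bfun_sub]
    exact hg1 _ _ (Bfun_mem h2z k m) (Bfun_mem h2z k n)
  simp only [hbracket, map_smul, LinearEquiv.coe_coe, hφ, hW]
end
end
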